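/- Let R be a commutative Noetherian local ring and Φ a subset of Spec R. Then the full subcategory V^{-1}(Φ) of finitely generated R-modules M whose nonfree locus is contained in Φ is a resolving subcategory: it contains R and is closed under direct summands, extensions, and kernels of epimorphisms. -/

import Mathlib

/-!
Freeness of `M_p` is tested one prime at a time, and localization is exact. Over the local
ring `R_p` a short exact sequence with free cokernel splits, and a finitely generated direct
summand of a free module is projective, hence free; this settles extensions, kernels of
epimorphisms and direct summands alike.
-/

open CategoryTheory IsLocalRing

noncomputable section

/-- The nonfree locus of a module: the set of primes `p` such that `M_p` is
not a free `R_p`-module. -/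
def nonfreeLocus (R : Type) [CommRing R] (M : Type) [AddCommGroup M]
    [Module R M] : Set (PrimeSpectrum R) :=
  { p | ¬ Module.Free (Localization.AtPrime p.asIdeal)
      (LocalizedModule p.asIdeal.primeCompl M) }

section SplitExact

variable {S M N P : Type*} [CommRing S] [AddCommGroup M] [AddCommGroup N] [AddCommGroup P]
  [Module S M] [Module S N] [Module S P]

theorem Module.free_of_retract [IsLocalRing S] [Module.Finite S N] [Module.Free S N]
    (i : M →ₗ[S] N) (r : N →ₗ[S] M) (hri : r ∘ₗ i = .id) : Module.Free S M := by
  have : Module.Finite S M :=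
    .of_surjective r fun m ↦ ⟨i m, by simpa using LinearMap.congr_fun hri m⟩
  have : Module.Projective S M := .of_split i r hri
  have := Module.finitePresentation_of_projective S M
  exact Module.free_of_flat_of_isLocalRing

variable {f : M →ₗ[S] N} {g : N →ₗ[S] P}

theorem Module.free_middle_of_exact [Module.Free S M] [Module.Free S P]
    (h : Function.Exact f g) (hf : Function.Injective f) (hg : Function.Surjective g) :
    Module.Free S N := by
  obtain ⟨l, hl⟩ := Module.projective_lifting_property g .id hg
  exact .of_equiv (h.splitSurjectiveEquiv hf ⟨l, hl⟩).1.symm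

theorem Module.free_left_of_exact [IsLocalRing S] [Module.Finite S N] [Module.Free S N]
    [Module.Free S P] (h : Function.Exact f g) (hf : Function.Injective f)
    (hg : Function.Surjective g) : Module.Free S M := by
  obtain ⟨r, hr⟩ := ((h.split_tfae hf hg).out 0 1).mp
    (Module.projective_lifting_property g .id hg)
  exact Module.free_of_retract f r hr

end SplitExact

theorem LocalizedModule.map_comp {R M N P : Type*} [CommSemiring R] (S : Submonoid R)
    [AddCommMonoid M] [AddCommMonoid N] [AddCommMonoid P] [Module R M] [Module R N] [Module R P]
    (f : M →ₗ[R] N) (g : N →ₗ[R] P) : map S (g ∘ₗ f) = map S g ∘ₗ map S f := by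
  ext x
  induction x using LocalizedModule.induction_on
  simp [map_mk]

section NonfreeLocus

variable {R M N P : Type} [CommRing R] [AddCommGroup M] [AddCommGroup N] [AddCommGroup P]
  [Module R M] [Module R N] [Module R P]

theorem nonfreeLocus_eq_compl_freeLocus : nonfreeLocus R M = (Module.freeLocus R M)ᶜ := rfl

theorem nonfreeLocus_self : nonfreeLocus R R = ∅ := by
  simp [nonfreeLocus_eq_compl_freeLocus, Module.freeLocus_eq_univ]

theorem nonfreeLocus_subset_of_retract [Module.Finite R N] (i : M →ₗ[R] N) (r : N →ₗ[R] M)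
    (hri : r ∘ₗ i = .id) : nonfreeLocus R M ⊆ nonfreeLocus R N := by
  intro p hp hN
  refine hp (Module.free_of_retract (LocalizedModule.map _ i) (LocalizedModule.map _ r) ?_)
  rw [← LocalizedModule.map_comp, hri, LocalizedModule.map_id]

variable {f : M →ₗ[R] N} {g : N →ₗ[R] P}

theorem nonfreeLocus_middle_subset_union (h : Function.Exact f g) (hf : Function.Injective f)
    (hg : Function.Surjective g) :
    nonfreeLocus R N ⊆ nonfreeLocus R M ∪ nonfreeLocus R P := by
  intro p hp
  by_contra hMP
  obtain ⟨hM, hP⟩ := not_or.mp hMP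
  have : Module.Free _ _ := not_not.mp hM
  have : Module.Free _ _ := not_not.mp hP
  exact hp (Module.free_middle_of_exact (LocalizedModule.map_exact _ f g h)
    (LocalizedModule.map_injective _ f hf) (LocalizedModule.map_surjective _ g hg))

theorem nonfreeLocus_left_subset_union [Module.Finite R N] (h : Function.Exact f g)
    (hf : Function.Injective f) (hg : Function.Surjective g) :
    nonfreeLocus R M ⊆ nonfreeLocus R N ∪ nonfreeLocus R P := by
  intro p hp
  by_contra hNP
  obtain ⟨hN, hP⟩ := not_or.mp hNP
  have : Module.Free _ _ := not_not.mp hN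
  have : Module.Free _ _ := not_not.mp hP
  exact hp (Module.free_left_of_exact (LocalizedModule.map_exact _ f g h)
    (LocalizedModule.map_injective _ f hf) (LocalizedModule.map_surjective _ g hg))

end NonfreeLocus

theorem nonfreeLocus_preimage_resolving
    (R : Type) [CommRing R]
    (Φ : Set (PrimeSpectrum R)) :
    (nonfreeLocus R R ⊆ Φ) ∧
    (∀ (A B C : ModuleCat.{0} R), Module.Finite R ↥A →
      nonfreeLocus R ↥A ⊆ Φ → Nonempty (A ≃ₗ[R] (↥B × ↥C)) →
      nonfreeLocus R ↥B ⊆ Φ) ∧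
    (∀ (A B C : ModuleCat.{0} R) (f : A →ₗ[R] B) (g : B →ₗ[R] C),
      Module.Finite R ↥A → Module.Finite R ↥B → Module.Finite R ↥C →
      Function.Injective f → Function.Surjective g →
      LinearMap.range f = LinearMap.ker g →
      nonfreeLocus R ↥A ⊆ Φ → nonfreeLocus R ↥C ⊆ Φ →
      nonfreeLocus R ↥B ⊆ Φ) ∧
    (∀ (A B C : ModuleCat.{0} R) (f : A →ₗ[R] B) (g : B →ₗ[R] C),
      Module.Finite R ↥A → Module.Finite R ↥B → Module.Finite R ↥C →
      Function.Injective f → Function.Surjective g →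
      LinearMap.range f = LinearMap.ker g →
      nonfreeLocus R ↥B ⊆ Φ → nonfreeLocus R ↥C ⊆ Φ →
      nonfreeLocus R ↥A ⊆ Φ) := by
  refine ⟨nonfreeLocus_self (R := R) ▸ Set.empty_subset Φ, ?_, ?_, ?_⟩
  · rintro A B C _ hA ⟨e⟩
    refine (nonfreeLocus_subset_of_retract (e.symm ∘ₗ LinearMap.inl R B C)
      (LinearMap.fst R B C ∘ₗ e) ?_).trans hA
    ext; simp
  · intro A B C f g _ _ _ hf hg hfg hA hC
    exact (nonfreeLocus_middle_subset_union (LinearMap.exact_iff.mpr hfg.symm) hf hg).trans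
      (Set.union_subset hA hC)
  · intro A B C f g _ _ _ hf hg hfg hB hC
    exact (nonfreeLocus_left_subset_union (LinearMap.exact_iff.mpr hfg.symm) hf hg).trans
      (Set.union_subset hB hC)
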